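/- Let Ω̂ ⊆ ℝ² be a measurable set, let F : ℝ² → ℝ² be twice continuously differentiable, injective on Ω̂, with det(DF(x̂)) > 0 for all x̂ ∈ Ω̂, and let u, v : ℝ² → ℝ² be continuously differentiable. Define the covariant Piola pullbacks û(x̂) = (DF(x̂))ᵀ u(F(x̂)) and v̂(x̂) = (DF(x̂))ᵀ v(F(x̂)). Then ∫_{F(Ω̂)} (curl u)(x) · (curl v)(x) dx = ∫_{Ω̂} (1 / det(DF(x̂))) (curl û)(x̂) · (curl v̂)(x̂) dx̂, where for a vector field w = (w₁, w₂) the scalar curl is curl w = ∂₁ w₂ − ∂₂ w₁ and integration is with respect to Lebesgue measure. -/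

import Mathlib

/-!
Substituting `x = F x̂` turns the left integral into one over `Ω̂` with weight
`|det DF| = det DF`, so it suffices to show `curl û = det DF · (curl u) ∘ F` pointwise.
Differentiating `û_i = ∂_i F ⬝ (u ∘ F)` gives `∂_j ∂_i F ⬝ (u ∘ F) + ∂_i F ⬝ Du (∂_j F)`;
in the curl the first terms cancel by the symmetry of `D²F`, and the rest is the antisymmetric
part of `DFᵀ Du DF`, which in dimension two is `det DF` times that of `Du`.
-/

open MeasureTheory

/-- Jacobian matrix of a map `F : ℝ² → ℝ²` at a point. -/
noncomputable def jacobian2 (F : (Fin 2 → ℝ) → (Fin 2 → ℝ)) (x : Fin 2 → ℝ) :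
    Matrix (Fin 2) (Fin 2) ℝ :=
  Matrix.of fun i j => fderiv ℝ F x (Pi.single j 1) i

/-- Scalar curl of a planar vector field: curl v = ∂₁v₂ − ∂₂v₁. -/
noncomputable def scalarCurl (v : (Fin 2 → ℝ) → (Fin 2 → ℝ)) (x : Fin 2 → ℝ) : ℝ :=
  fderiv ℝ (fun y => v y 1) x (Pi.single 0 1) - fderiv ℝ (fun y => v y 0) x (Pi.single 1 1)

lemma fderiv_dotProduct_apply {E ι : Type*} [NormedAddCommGroup E] [NormedSpace ℝ E]
    [Fintype ι] {f g : E → ι → ℝ} {x : E} (hf : DifferentiableAt ℝ f x)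
    (hg : DifferentiableAt ℝ g x) (h : E) :
    fderiv ℝ (fun y => f y ⬝ᵥ g y) x h = fderiv ℝ f x h ⬝ᵥ g x + f x ⬝ᵥ fderiv ℝ g x h := by
  have hsum : HasFDerivAt (fun y => ∑ j, f y j * g y j)
      (∑ j, (f x j • (ContinuousLinearMap.proj j).comp (fderiv ℝ g x) +
        g x j • (ContinuousLinearMap.proj j).comp (fderiv ℝ f x))) x :=
    HasFDerivAt.fun_sum fun j _ =>
      (hasFDerivAt_pi'.1 hf.hasFDerivAt j).mul (hasFDerivAt_pi'.1 hg.hasFDerivAt j)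
  rw [show (fun y => f y ⬝ᵥ g y) = fun y => ∑ j, f y j * g y j from rfl, hsum.fderiv]
  simp only [dotProduct, sum_apply, ← Finset.sum_add_distrib]
  refine Finset.sum_congr rfl fun j _ => ?_
  simp only [add_apply, smul_apply, ContinuousLinearMap.comp_apply,
    ContinuousLinearMap.proj_apply, smul_eq_mul]
  ring

lemma jacobian2_eq_toMatrix' (F : (Fin 2 → ℝ) → (Fin 2 → ℝ)) (x : Fin 2 → ℝ) :
    jacobian2 F x = LinearMap.toMatrix' (fderiv ℝ F x : (Fin 2 → ℝ) →ₗ[ℝ] (Fin 2 → ℝ)) := by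
  ext i j
  simp [jacobian2, LinearMap.toMatrix'_apply]

lemma det_jacobian2 (F : (Fin 2 → ℝ) → (Fin 2 → ℝ)) (x : Fin 2 → ℝ) :
    (jacobian2 F x).det = (fderiv ℝ F x).det := by
  rw [jacobian2_eq_toMatrix', LinearMap.det_toMatrix', ContinuousLinearMap.det]

noncomputable def covariantPiola (F u : (Fin 2 → ℝ) → (Fin 2 → ℝ)) (x : Fin 2 → ℝ) :
    Fin 2 → ℝ :=
  (jacobian2 F x).transpose.mulVec (u (F x))

lemma covariantPiola_apply (F u : (Fin 2 → ℝ) → (Fin 2 → ℝ)) (x : Fin 2 → ℝ) (i : Fin 2) :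
    covariantPiola F u x i = fderiv ℝ F x (Pi.single i 1) ⬝ᵥ u (F x) := rfl

lemma scalarCurl_eq_fderiv {v : (Fin 2 → ℝ) → (Fin 2 → ℝ)} {x : Fin 2 → ℝ}
    (hv : DifferentiableAt ℝ v x) :
    scalarCurl v x = fderiv ℝ v x (Pi.single 0 1) 1 - fderiv ℝ v x (Pi.single 1 1) 0 := by
  simp [scalarCurl, fderiv_apply hv]

lemma apply_eq_smul_single_add_smul_single (T : (Fin 2 → ℝ) →L[ℝ] (Fin 2 → ℝ))
    (w : Fin 2 → ℝ) :
    T w = w 0 • T (Pi.single 0 1) + w 1 • T (Pi.single 1 1) := by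
  calc T w = T (w 0 • Pi.single 0 1 + w 1 • Pi.single 1 1) := by
        congr 1; ext i; fin_cases i <;> simp
    _ = _ := by rw [map_add, map_smul, map_smul]

lemma dotProduct_sub_dotProduct_eq_det_mul (A U : (Fin 2 → ℝ) →L[ℝ] (Fin 2 → ℝ)) :
    A (Pi.single 1 1) ⬝ᵥ U (A (Pi.single 0 1)) - A (Pi.single 0 1) ⬝ᵥ U (A (Pi.single 1 1)) =
      A.det * (U (Pi.single 0 1) 1 - U (Pi.single 1 1) 0) := by
  rw [ContinuousLinearMap.det, ← LinearMap.det_toMatrix', Matrix.det_fin_two,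
    apply_eq_smul_single_add_smul_single U (A _), apply_eq_smul_single_add_smul_single U (A _)]
  simp only [dotProduct, Pi.add_apply, Pi.smul_apply, smul_eq_mul, Fin.sum_univ_two,
    LinearMap.toMatrix'_apply, ContinuousLinearMap.coe_coe]
  ring

lemma fderiv_covariantPiola_apply {F u : (Fin 2 → ℝ) → (Fin 2 → ℝ)} {x : Fin 2 → ℝ}
    (hF : DifferentiableAt ℝ F x) (hF' : DifferentiableAt ℝ (fderiv ℝ F) x)
    (hu : DifferentiableAt ℝ u (F x)) (i : Fin 2) (h : Fin 2 → ℝ) :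
    fderiv ℝ (fun y => covariantPiola F u y i) x h =
      fderiv ℝ (fderiv ℝ F) x h (Pi.single i 1) ⬝ᵥ u (F x) +
        fderiv ℝ F x (Pi.single i 1) ⬝ᵥ fderiv ℝ u (F x) (fderiv ℝ F x h) := by
  simp only [covariantPiola_apply]
  rw [fderiv_dotProduct_apply (hF'.clm_apply (differentiableAt_const _))
      (g := fun y => u (F y)) (hu.comp x hF),
    fderiv_clm_apply hF' (differentiableAt_const _), fderiv_fun_comp x hu hF]
  simp

theorem scalarCurl_covariantPiola {F u : (Fin 2 → ℝ) → (Fin 2 → ℝ)} {x : Fin 2 → ℝ}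
    (hF : ContDiffAt ℝ 2 F x) (hu : DifferentiableAt ℝ u (F x)) :
    scalarCurl (covariantPiola F u) x =
      (jacobian2 F x).det * scalarCurl u (F x) := by
  have hF₁ : DifferentiableAt ℝ F x := hF.differentiableAt (by norm_num)
  have hF₂ : DifferentiableAt ℝ (fderiv ℝ F) x :=
    (hF.fderiv_right (m := 1) (by norm_num)).differentiableAt one_ne_zero
  have hsymm := hF.isSymmSndFDerivAt (by simp) (Pi.single 0 1) (Pi.single 1 1)
  rw [scalarCurl, fderiv_covariantPiola_apply hF₁ hF₂ hu,
    fderiv_covariantPiola_apply hF₁ hF₂ hu, hsymm, scalarCurl_eq_fderiv hu, det_jacobian2,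
    ← dotProduct_sub_dotProduct_eq_det_mul]
  ring

/-- Transformation of the curl-curl form under the covariant Piola mapping in 2D:
∫_{F(Ω̂)} curl u · curl v dx = ∫_{Ω̂} (1/det DF) curl û · curl v̂ dx̂. -/
theorem piola_curl_integral_transform_2d
    (Ω : Set (Fin 2 → ℝ)) (hΩ : MeasurableSet Ω)
    (F : (Fin 2 → ℝ) → (Fin 2 → ℝ)) (hF : ContDiff ℝ 2 F)
    (hinj : Set.InjOn F Ω)
    (hdet : ∀ x ∈ Ω, 0 < (jacobian2 F x).det)
    (u v : (Fin 2 → ℝ) → (Fin 2 → ℝ))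
    (hu : ContDiff ℝ 1 u) (hv : ContDiff ℝ 1 v)
    (uhat vhat : (Fin 2 → ℝ) → (Fin 2 → ℝ))
    (huhat : ∀ x : Fin 2 → ℝ, uhat x = (jacobian2 F x).transpose.mulVec (u (F x)))
    (hvhat : ∀ x : Fin 2 → ℝ, vhat x = (jacobian2 F x).transpose.mulVec (v (F x))) :
    ∫ x in F '' Ω, scalarCurl u x * scalarCurl v x =
      ∫ x in Ω, (1 / (jacobian2 F x).det) * (scalarCurl uhat x * scalarCurl vhat x) := by
  obtain rfl : uhat = covariantPiola F u := funext huhat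
  obtain rfl : vhat = covariantPiola F v := funext hvhat
  rw [integral_image_eq_integral_abs_det_fderiv_smul volume hΩ
    (fun x _ => (hF.differentiable (by norm_num) x).hasFDerivAt.hasFDerivWithinAt) hinj]
  refine setIntegral_congr_fun hΩ fun x hx => ?_
  rw [scalarCurl_covariantPiola hF.contDiffAt (hu.differentiable one_ne_zero _),
    scalarCurl_covariantPiola hF.contDiffAt (hv.differentiable one_ne_zero _),
    ← det_jacobian2, abs_of_pos (hdet x hx), smul_eq_mul]
  field_simp
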